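/- If v ∈ Γ(0), then v(x) = 0 for Lebesgue-almost every x ∈ I \ M at which f(x) > 0; equivalently, v vanishes almost everywhere with respect to the measure f·𝓛¹ restricted to I \ M. Consequently the tangent space to μ is ℝ a.e. on I \ M for the absolutely continuous part of μ. -/

import Mathlib

/-!
Let `x ∈ I \ M`. Then `1/f` is integrable on some interval `J ∋ x`, and the Cauchy–Schwarz
inequality `∫_J |g| ≤ ‖g‖_{L²(μ)} (∫_J 1/f)^{1/2}` turns `L²(μ)`-convergence into
`L¹(J)`-convergence; moreover `f > 0` a.e. on `J`, so Lebesgue measure on `J` is absolutely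
continuous with respect to `μ`. Hence `u_n' → v` in `L¹(J)` and, along a subsequence, `u_n → 0`
a.e. on `J`. Letting `n → ∞` in `u_n(y) - u_n(x₀) = ∫_{x₀}^y u_n'` shows that the primitive of `v`
vanishes a.e. on `J`, hence everywhere on `J` by continuity, so `v = 0` a.e. on `J` by the
Lebesgue differentiation theorem. Countably many such intervals cover `I \ M`.
-/

open MeasureTheory Filter Set
open scoped ENNReal

/-- `v ∈ Γ(0)`: `v` is a `μ`-gradient of `0`. -/
def IsGradientOfZero (μ : Measure ℝ) (v : ℝ → ℝ) : Prop :=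
  ∃ U : ℕ → ℝ → ℝ, (∀ n, ContDiff ℝ 1 (U n)) ∧
    Tendsto (fun n => eLpNorm (U n) 2 μ) atTop (nhds 0) ∧
    Tendsto (fun n => eLpNorm (fun x => deriv (U n) x - v x) 2 μ) atTop (nhds 0)

open scoped Topology

theorem lintegral_enorm_le_eLpNorm_two_mul {α E : Type*} [MeasurableSpace α]
    [NormedAddCommGroup E] {ν μ : Measure α} {w : α → ℝ≥0∞} (hw : AEMeasurable w ν)
    (hw0 : ∀ᵐ x ∂ν, w x ≠ 0) (hwtop : ∀ᵐ x ∂ν, w x ≠ ∞) (hle : ν.withDensity w ≤ μ)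
    {g : α → E} (hg : AEStronglyMeasurable g ν) :
    ∫⁻ x, ‖g x‖ₑ ∂ν ≤ eLpNorm g 2 μ * (∫⁻ x, (w x)⁻¹ ∂ν) ^ (1 / 2 : ℝ) := by
  have hsplit : ∀ᵐ x ∂ν,
      ‖g x‖ₑ = (‖g x‖ₑ * w x ^ (1 / 2 : ℝ)) * (w x ^ (1 / 2 : ℝ))⁻¹ := by
    filter_upwards [hw0, hwtop] with x h0 htop
    rw [mul_assoc, ENNReal.mul_inv_cancel (by simp [h0]) (by simp [htop]), mul_one]
  have hsq : ∀ x, (‖g x‖ₑ * w x ^ (1 / 2 : ℝ)) ^ (2 : ℝ) = w x * ‖g x‖ₑ ^ (2 : ℝ) := by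
    intro x
    rw [ENNReal.mul_rpow_of_nonneg _ _ zero_le_two, ← ENNReal.rpow_mul]
    norm_num [mul_comm]
  have hsq' : ∀ x, (w x ^ (1 / 2 : ℝ))⁻¹ ^ (2 : ℝ) = (w x)⁻¹ := by
    intro x
    rw [ENNReal.inv_rpow, ← ENNReal.rpow_mul]
    norm_num
  have hwg : (∫⁻ x, ‖g x‖ₑ ^ (2 : ℝ) ∂ν.withDensity w) ^ (1 / 2 : ℝ) =
      eLpNorm g 2 (ν.withDensity w) := by
    rw [eLpNorm_eq_lintegral_rpow_enorm_toReal two_ne_zero ENNReal.ofNat_ne_top]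
    norm_num
  calc ∫⁻ x, ‖g x‖ₑ ∂ν
      = ∫⁻ x, (‖g x‖ₑ * w x ^ (1 / 2 : ℝ)) * (w x ^ (1 / 2 : ℝ))⁻¹ ∂ν := lintegral_congr_ae hsplit
    _ ≤ (∫⁻ x, (‖g x‖ₑ * w x ^ (1 / 2 : ℝ)) ^ (2 : ℝ) ∂ν) ^ (1 / 2 : ℝ) *
          (∫⁻ x, (w x ^ (1 / 2 : ℝ))⁻¹ ^ (2 : ℝ) ∂ν) ^ (1 / 2 : ℝ) :=
        ENNReal.lintegral_mul_le_Lp_mul_Lq ν .two_two (hg.enorm.mul (hw.pow_const _))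
          (hw.pow_const _).inv
    _ = eLpNorm g 2 (ν.withDensity w) * (∫⁻ x, (w x)⁻¹ ∂ν) ^ (1 / 2 : ℝ) := by
        simp only [hsq, hsq', ← hwg]
        rw [lintegral_withDensity_eq_lintegral_mul₀ hw (hg.enorm.pow_const _)]
        rfl
    _ ≤ eLpNorm g 2 μ * (∫⁻ x, (w x)⁻¹ ∂ν) ^ (1 / 2 : ℝ) := by gcongr

theorem ae_restrict_of_forall_exists_mem_nhdsWithin {α : Type*} [MeasurableSpace α]
    [TopologicalSpace α] [SecondCountableTopology α] {μ : Measure α} {s : Set α} {p : α → Prop}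
    (h : ∀ x ∈ s, ∃ u ∈ 𝓝[s] x, ∀ᵐ y ∂μ.restrict u, p y) : ∀ᵐ y ∂μ.restrict s, p y := by
  choose! u hu hpu using h
  obtain ⟨t, hts, htc, hcover⟩ := TopologicalSpace.countable_cover_nhdsWithin hu
  exact ae_restrict_of_ae_restrict_of_subset hcover
    ((ae_restrict_biUnion_iff _ htc _).2 fun x hx => hpu x (hts hx))

section IntervalIntegral

variable {E : Type*} [NormedAddCommGroup E] [NormedSpace ℝ E]

theorem enorm_intervalIntegral_le_setLIntegral {μ : Measure ℝ} {g : ℝ → E} {J : Set ℝ}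
    {x y : ℝ} (hxy : uIcc x y ⊆ J) : ‖∫ t in x..y, g t ∂μ‖ₑ ≤ ∫⁻ t in J, ‖g t‖ₑ ∂μ :=
  calc ‖∫ t in x..y, g t ∂μ‖ₑ = ‖∫ t in uIoc x y, g t ∂μ‖ₑ := by
        simp only [← ofReal_norm, intervalIntegral.norm_integral_eq_norm_integral_uIoc]
    _ ≤ ∫⁻ t in uIoc x y, ‖g t‖ₑ ∂μ := enorm_integral_le_lintegral_enorm _
    _ ≤ ∫⁻ t in J, ‖g t‖ₑ ∂μ := lintegral_mono_set (uIoc_subset_uIcc.trans hxy)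

theorem tendsto_intervalIntegral_of_tendsto_setLIntegral {ι : Type*} {l : Filter ι}
    {μ : Measure ℝ} {F : ι → ℝ → E} {g : ℝ → E} {J : Set ℝ} {x y : ℝ} (hxy : uIcc x y ⊆ J)
    (hF : ∀ᶠ i in l, IntervalIntegrable (F i) μ x y) (hg : IntervalIntegrable g μ x y)
    (hFg : Tendsto (fun i => ∫⁻ t in J, ‖F i t - g t‖ₑ ∂μ) l (𝓝 0)) :
    Tendsto (fun i => ∫ t in x..y, F i t ∂μ) l (𝓝 (∫ t in x..y, g t ∂μ)) := by
  rw [tendsto_iff_edist_tendsto_0]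
  refine tendsto_of_tendsto_of_tendsto_of_le_of_le' tendsto_const_nhds hFg
    (Eventually.of_forall fun _ => zero_le) ?_
  filter_upwards [hF] with i hi
  rw [edist_eq_enorm_sub, ← intervalIntegral.integral_sub hi hg]
  exact enorm_intervalIntegral_le_setLIntegral hxy

variable [CompleteSpace E]

theorem ContDiff.intervalIntegral_deriv_eq_sub {u : ℝ → E} (hu : ContDiff ℝ 1 u) (a b : ℝ) :
    ∫ t in a..b, deriv u t = u b - u a :=
  intervalIntegral.integral_deriv_eq_sub
    (fun _ _ => (hu.differentiable one_ne_zero).differentiableAt)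
    ((hu.continuous_deriv le_rfl).intervalIntegrable a b)

theorem ae_eq_zero_of_ae_intervalIntegral_eq_zero {v : ℝ → E} {p q x₀ : ℝ}
    (hv : IntegrableOn v (Ioo p q)) (hx₀ : x₀ ∈ Ioo p q)
    (h : ∀ᵐ y ∂volume.restrict (Ioo p q), ∫ t in x₀..y, v t = 0) :
    ∀ᵐ y ∂volume.restrict (Ioo p q), v y = 0 := by
  have hvpq : IntervalIntegrable v volume p q :=
    (intervalIntegrable_iff_integrableOn_Ioo_of_le (hx₀.1.trans hx₀.2).le).2 hv
  have hIoo : Ioo p q ⊆ uIcc p q := Ioo_subset_Icc_self.trans Icc_subset_uIcc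
  have hzero : EqOn (fun y => ∫ t in x₀..y, v t) 0 (Ioo p q) :=
    Measure.eqOn_open_of_ae_eq h isOpen_Ioo
      ((intervalIntegral.continuousOn_primitive_interval' hvpq (hIoo hx₀)).mono hIoo)
      continuousOn_const
  filter_upwards [ae_restrict_of_ae hvpq.ae_hasDerivAt_integral, ae_restrict_mem measurableSet_Ioo]
    with y hderiv hy
  refine (hderiv (hIoo hy) x₀ (hIoo hx₀)).unique ?_
  exact (hasDerivAt_const y 0).congr_of_eventuallyEq
    (hzero.eventuallyEq_of_mem (isOpen_Ioo.mem_nhds hy))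

theorem ae_eq_zero_of_tendsto_zero_of_tendsto_deriv {U : ℕ → ℝ → E}
    {v : ℝ → E} {p q : ℝ} (hU : ∀ n, ContDiff ℝ 1 (U n)) (hv : IntegrableOn v (Ioo p q))
    (hU0 : ∀ᵐ x ∂volume.restrict (Ioo p q), Tendsto (fun n => U n x) atTop (𝓝 0))
    (hUv : Tendsto (fun n => ∫⁻ x in Ioo p q, ‖deriv (U n) x - v x‖ₑ) atTop (𝓝 0)) :
    ∀ᵐ x ∂volume.restrict (Ioo p q), v x = 0 := by
  rcases (ae (volume.restrict (Ioo p q))).eq_or_neBot with hJ | hJ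
  · simp [hJ]
  obtain ⟨x₀, hx₀, hx₀J⟩ := (hU0.and (ae_restrict_mem measurableSet_Ioo)).exists
  refine ae_eq_zero_of_ae_intervalIntegral_eq_zero hv hx₀J ?_
  filter_upwards [hU0, ae_restrict_mem measurableSet_Ioo] with y hy hyJ
  have hxy : uIcc x₀ y ⊆ Ioo p q := ordConnected_Ioo.uIcc_subset hx₀J hyJ
  refine tendsto_nhds_unique (tendsto_intervalIntegral_of_tendsto_setLIntegral hxy
    (Eventually.of_forall fun n => ((hU n).continuous_deriv le_rfl).intervalIntegrable _ _)
    ((hv.mono_set hxy).intervalIntegrable) hUv) ?_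
  simpa [(hU _).intervalIntegral_deriv_eq_sub] using hy.sub hx₀

end IntervalIntegral

theorem IsGradientOfZero.ae_restrict_Ioo_eq_zero {μ : Measure ℝ} {v : ℝ → ℝ}
    (hv : IsGradientOfZero μ v) (hvL2 : MemLp v 2 μ) {f : ℝ → ℝ} (hf : Measurable f)
    (hle : volume.withDensity (fun x => ENNReal.ofReal (f x)) ≤ μ) {p q : ℝ}
    (hfin : ∫⁻ t in Ioo p q, (ENNReal.ofReal (f t))⁻¹ ≠ ∞) :
    ∀ᵐ x ∂volume.restrict (Ioo p q), v x = 0 := by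
  obtain ⟨U, hU, hU0, hUv⟩ := hv
  set J := Ioo p q
  have hw : AEMeasurable (fun x => ENNReal.ofReal (f x)) (volume.restrict J) :=
    hf.ennreal_ofReal.aemeasurable
  have hw0 : ∀ᵐ x ∂volume.restrict J, ENNReal.ofReal (f x) ≠ 0 := by
    filter_upwards [ae_lt_top' hw.inv hfin] with x hx using (ENNReal.inv_lt_top.1 hx).ne'
  have hleJ : (volume.restrict J).withDensity (fun x => ENNReal.ofReal (f x)) ≤ μ := by
    rw [← restrict_withDensity measurableSet_Ioo]
    exact Measure.restrict_le_self.trans hle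
  have hac : volume.restrict J ≪ μ :=
    (withDensity_absolutelyContinuous' hw hw0).trans (Measure.absolutelyContinuous_of_le hleJ)
  set C := (∫⁻ t in J, (ENNReal.ofReal (f t))⁻¹) ^ (1 / 2 : ℝ)
  have hC : C ≠ ∞ := ENNReal.rpow_ne_top_of_nonneg (by norm_num) hfin
  have hbound (g : ℝ → ℝ) (hg : AEStronglyMeasurable g μ) :
      ∫⁻ x in J, ‖g x‖ₑ ≤ eLpNorm g 2 μ * C :=
    lintegral_enorm_le_eLpNorm_two_mul hw hw0 (by simp) hleJ (hg.mono_ac hac)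
  have hvJ : IntegrableOn v J :=
    ⟨hvL2.1.mono_ac hac, (hbound v hvL2.1).trans_lt (ENNReal.mul_lt_top hvL2.2 hC.lt_top)⟩
  have hL1 : Tendsto (fun n => ∫⁻ x in J, ‖deriv (U n) x - v x‖ₑ) atTop (𝓝 0) := by
    refine tendsto_of_tendsto_of_tendsto_of_le_of_le tendsto_const_nhds ?_ (fun _ => zero_le)
      fun n => hbound _ (((hU n).continuous_deriv le_rfl).aestronglyMeasurable.sub hvL2.1)
    simpa using ENNReal.Tendsto.mul_const hUv (Or.inr hC)
  have hUμ : TendstoInMeasure μ U atTop 0 :=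
    tendstoInMeasure_of_tendsto_eLpNorm two_ne_zero
      (fun n => (hU n).continuous.aestronglyMeasurable) aestronglyMeasurable_const
      (by simpa only [sub_zero] using hU0)
  obtain ⟨φ, hφ, hUφ⟩ := hUμ.exists_seq_tendsto_ae
  replace hUφ : ∀ᵐ x ∂volume.restrict J, Tendsto (fun n => U (φ n) x) atTop (𝓝 0) :=
    hac.ae_le hUφ
  exact ae_eq_zero_of_tendsto_zero_of_tendsto_deriv (fun n => hU (φ n)) hvJ hUφ
    (hL1.comp hφ.tendsto_atTop)

theorem gradient_of_zero_vanishes_outside_critical_set_general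
    (a b : ℝ) (I : Set ℝ) (hI : I = Set.Ioo a b)
    (μ : Measure ℝ) (f : ℝ → ℝ) (hfmeas : Measurable f) (μs : Measure ℝ)
    (hdecomp : μ = volume.withDensity (fun x => ENNReal.ofReal (f x)) + μs)
    (M : Set ℝ)
    (hM : M = {x ∈ closure I | ∀ ε > 0,
      ∫⁻ t in I ∩ Set.Ioo (x - ε) (x + ε), (ENNReal.ofReal (f t))⁻¹ = ⊤})
    (v : ℝ → ℝ) (hvL2 : MemLp v 2 μ) (hv : IsGradientOfZero μ v) :
    ∀ᵐ x ∂(volume.restrict (I \ M)), 0 < f x → v x = 0 := by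
  have hle : volume.withDensity (fun x => ENNReal.ofReal (f x)) ≤ μ :=
    hdecomp ▸ Measure.le_add_right le_rfl
  refine (ae_restrict_of_forall_exists_mem_nhdsWithin fun x hx => ?_).mono fun _ hx _ => hx
  obtain ⟨ε, hε, hfin⟩ : ∃ ε > 0,
      ∫⁻ t in I ∩ Ioo (x - ε) (x + ε), (ENNReal.ofReal (f t))⁻¹ ≠ ∞ := by
    by_contra! h
    exact hx.2 (hM ▸ ⟨subset_closure hx.1, h⟩)
  have hxI : x ∈ Ioo a b := hI ▸ hx.1
  rw [hI, Ioo_inter_Ioo] at hfin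
  refine ⟨_, mem_nhdsWithin_of_mem_nhds (Ioo_mem_nhds ?_ ?_),
    hv.ae_restrict_Ioo_eq_zero hvL2 hfmeas hle hfin⟩
  · exact max_lt hxI.1 (by linarith)
  · exact lt_min hxI.2 (by linarith)

/-- Any `μ`-gradient of `0` vanishes `f·𝓛¹`-a.e. on `I \ M`: the tangent space to `μ` is
`ℝ` a.e. on `I \ M` for the absolutely continuous part of `μ`. -/
theorem gradient_of_zero_vanishes_outside_critical_set
    (a b : ℝ) (hab : a < b) (I : Set ℝ) (hI : I = Set.Ioo a b)
    (μ : Measure ℝ) [IsFiniteMeasure μ] (hμI : μ Iᶜ = 0)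
    (f : ℝ → ℝ) (hfmeas : Measurable f) (hfnonneg : 0 ≤ f)
    (μs : Measure ℝ) (hsing : μs ⟂ₘ volume)
    (hdecomp : μ = volume.withDensity (fun x => ENNReal.ofReal (f x)) + μs)
    (M : Set ℝ)
    (hM : M = {x ∈ closure I | ∀ ε > 0,
      ∫⁻ t in I ∩ Set.Ioo (x - ε) (x + ε), (ENNReal.ofReal (f t))⁻¹ = ⊤})
    (v : ℝ → ℝ) (hvL2 : MemLp v 2 μ) (hv : IsGradientOfZero μ v) :
    ∀ᵐ x ∂(volume.restrict (I \ M)), 0 < f x → v x = 0 :=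
  gradient_of_zero_vanishes_outside_critical_set_general a b I hI μ f hfmeas μs hdecomp M hM v hvL2
    hv
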